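/- arXiv:2009.06211 — 2 statements merged into one kernel-verified Lean document; each statement's English description precedes it below -/
import Mathlib

section
/- Let W be a real m×m matrix and A a real n×n matrix such that the spectral radius of |Aᵀ ⊗ W| is strictly less than 1, let φ : ℝ → ℝ be componentwise non-expansive, and let B be a real m×n matrix. Define X₀ = 0 and X_{t+1} = φ(W X_t A + B) entrywise. Then the sequence (X_t) converges, and its limit X satisfies X = φ(W X A + B). -/
open Matrix Kronecker Filter

/-- The spectral radius of a real square matrix: the supremum of the moduli of its
complex eigenvalues (elements of the spectrum of the matrix viewed over `ℂ`). -/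
noncomputable def specRad {ι : Type*} [Fintype ι] [DecidableEq ι]
    (M : Matrix ι ι ℝ) : ENNReal :=
  spectralRadius ℂ (M.map Complex.ofReal)

/-! Vectorising, `vec X_{t+1} = G (vec X_t)` with `G x = φ ∘ ((Aᵀ ⊗ W) x + vec B)`. As `φ` is
non-expansive, `|G x - G y| ≤ N |x - y|` entrywise for the nonnegative matrix `N = |Aᵀ ⊗ W|`, so
the successive differences of the iterates are bounded by `Nᵗ |G 0|`. By Gelfand's formula,
`ρ(N) < 1` makes `‖Nᵗ‖` summable; the iterates are therefore Cauchy, and their limit is a fixed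
point of the continuous map `G`. -/

theorem summable_norm_pow_of_spectralRadius_lt_one {𝔸 : Type*} [NormedRing 𝔸]
    [NormedAlgebra ℂ 𝔸] [CompleteSpace 𝔸] {a : 𝔸} (h : spectralRadius ℂ a < 1) :
    Summable fun n : ℕ => ‖a ^ n‖ := by
  obtain ⟨r, hρr, hr⟩ := ENNReal.lt_iff_exists_nnreal_btwn.mp h
  refine .of_norm_bounded_eventually_nat
    (summable_geometric_of_lt_one r.coe_nonneg (by exact_mod_cast hr)) ?_
  filter_upwards [(spectrum.pow_norm_pow_one_div_tendsto_nhds_spectralRadius a).eventually_lt_const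
    hρr, eventually_ne_atTop 0] with n hn hn0
  have hroot : ‖a ^ n‖ ^ ((n : ℝ)⁻¹) < r :=
    (ENNReal.ofReal_lt_coe_iff (by positivity)).mp (by simpa only [one_div] using hn)
  calc ‖‖a ^ n‖‖ = (‖a ^ n‖ ^ ((n : ℝ)⁻¹)) ^ n := by
        rw [norm_norm, Real.rpow_inv_natCast_pow (norm_nonneg _) hn0]
    _ ≤ (r : ℝ) ^ n := pow_le_pow_left₀ (by positivity) hroot.le n

namespace Matrix

variable {ι κ R : Type*} [Fintype κ]

theorem abs_mulVec_le [Ring R] [LinearOrder R] [IsOrderedRing R] (K : Matrix ι κ R)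
    (v : κ → R) : |K *ᵥ v| ≤ K.map abs *ᵥ |v| := fun i => by
  simp only [Pi.abs_apply, mulVec, dotProduct, map_apply, ← abs_mul]
  exact Finset.abs_sum_le_sum_abs _ _

theorem mulVec_mono_of_nonneg [Semiring R] [PartialOrder R] [IsOrderedRing R] {N : Matrix ι κ R}
    (hN : ∀ i j, 0 ≤ N i j) {v w : κ → R} (h : v ≤ w) : N *ᵥ v ≤ N *ᵥ w := fun i =>
  Finset.sum_le_sum fun j _ => mul_le_mul_of_nonneg_left (h j) (hN i j)

end Matrix

section LinftyOpNorm

attribute [local instance] Matrix.linftyOpNormedAddCommGroup Matrix.linftyOpNormedRing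
  Matrix.linftyOpNormedAlgebra

variable {ι κ : Type*} [Fintype ι] [Fintype κ]

theorem Matrix.linfty_opNorm_map_ofReal (M : Matrix ι κ ℝ) :
    ‖M.map Complex.ofReal‖ = ‖M‖ := by
  simp [linfty_opNorm_def]

theorem Matrix.summable_linfty_opNorm_pow_of_specRad_lt_one [DecidableEq ι] {N : Matrix ι ι ℝ}
    (h : specRad N < 1) : Summable fun t : ℕ => ‖N ^ t‖ := by
  refine (summable_norm_pow_of_spectralRadius_lt_one h).congr fun t => ?_
  rw [← linfty_opNorm_map_ofReal (N ^ t)]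
  exact congrArg norm (Matrix.map_pow N Complex.ofRealHom t).symm

theorem norm_le_linfty_opNorm_mul_of_abs_le_mulVec {N : Matrix ι κ ℝ} {v : ι → ℝ} {w : κ → ℝ}
    (h : |v| ≤ N *ᵥ |w|) : ‖v‖ ≤ ‖N‖ * ‖w‖ := by
  refine (pi_norm_le_iff_of_nonneg (by positivity)).2 fun i => ?_
  calc ‖v i‖ ≤ ‖(N *ᵥ |w|) i‖ := by
        simpa only [Real.norm_eq_abs, Pi.abs_apply] using (h i).trans (le_abs_self _)
    _ ≤ ‖N *ᵥ |w|‖ := norm_le_pi_norm _ i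
    _ ≤ ‖N‖ * ‖|w|‖ := linfty_opNorm_mulVec _ _
    _ = ‖N‖ * ‖w‖ := by simp [Pi.norm_def]

theorem abs_iterate_succ_sub_iterate_le [DecidableEq ι] {N : Matrix ι ι ℝ} (hN : ∀ i j, 0 ≤ N i j)
    {G : (ι → ℝ) → ι → ℝ} (hG : ∀ x y, |G x - G y| ≤ N *ᵥ |x - y|) (x : ι → ℝ) (t : ℕ) :
    |G^[t + 1] x - G^[t] x| ≤ (N ^ t) *ᵥ |G x - x| := by
  induction t with
  | zero => simp
  | succ t ih =>
    calc |G^[t + 2] x - G^[t + 1] x| = |G (G^[t + 1] x) - G (G^[t] x)| := by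
          rw [Function.iterate_succ_apply' G (t + 1), Function.iterate_succ_apply' G t]
      _ ≤ N *ᵥ |G^[t + 1] x - G^[t] x| := hG _ _
      _ ≤ N *ᵥ ((N ^ t) *ᵥ |G x - x|) := mulVec_mono_of_nonneg hN ih
      _ = (N ^ (t + 1)) *ᵥ |G x - x| := by rw [mulVec_mulVec, pow_succ']

theorem exists_tendsto_iterate_isFixedPt_of_abs_sub_le_mulVec [DecidableEq ι]
    {N : Matrix ι ι ℝ} (hN : ∀ i j, 0 ≤ N i j) (hρ : specRad N < 1)
    {G : (ι → ℝ) → ι → ℝ} (hG : ∀ x y, |G x - G y| ≤ N *ᵥ |x - y|) (x : ι → ℝ) :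
    ∃ y, Tendsto (fun t => G^[t] x) atTop (nhds y) ∧ Function.IsFixedPt G y := by
  have hcauchy : CauchySeq fun t => G^[t] x := by
    refine cauchySeq_of_dist_le_of_summable (fun t => ‖N ^ t‖ * ‖G x - x‖) (fun t => ?_)
      ((summable_linfty_opNorm_pow_of_specRad_lt_one hρ).mul_right _)
    rw [dist_comm, dist_eq_norm]
    exact norm_le_linfty_opNorm_mul_of_abs_le_mulVec (abs_iterate_succ_sub_iterate_le hN hG x t)
  obtain ⟨y, hy⟩ := cauchySeq_tendsto_of_complete hcauchy
  have hG_lipschitz : LipschitzWith ‖N‖₊ G := LipschitzWith.of_dist_le_mul fun x x' => by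
    simpa only [dist_eq_norm, coe_nnnorm] using norm_le_linfty_opNorm_mul_of_abs_le_mulVec (hG x x')
  exact ⟨y, hy, isFixedPt_of_tendsto_iterate hy hG_lipschitz.continuous.continuousAt⟩

end LinftyOpNorm

theorem abs_comp_mulVec_add_sub_le {ι κ : Type*} [Fintype κ] {φ : ℝ → ℝ}
    (hφ : ∀ a b : ℝ, |φ a - φ b| ≤ |a - b|) (K : Matrix ι κ ℝ) (c : ι → ℝ) (x y : κ → ℝ) :
    |φ ∘ (K *ᵥ x + c) - φ ∘ (K *ᵥ y + c)| ≤ K.map abs *ᵥ |x - y| := fun i => by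
  calc |φ ((K *ᵥ x + c) i) - φ ((K *ᵥ y + c) i)| ≤ |(K *ᵥ x + c) i - (K *ᵥ y + c) i| := hφ _ _
    _ = |K *ᵥ (x - y)| i := by simp [mulVec_sub]
    _ ≤ (K.map abs *ᵥ |x - y|) i := K.abs_mulVec_le _ i

theorem stmt_4 {m n : ℕ} (W : Matrix (Fin m) (Fin m) ℝ) (A : Matrix (Fin n) (Fin n) ℝ)
    (hρ : specRad ((Aᵀ ⊗ₖ W).map fun a => |a|) < 1)
    (φ : ℝ → ℝ) (hφ : ∀ a b : ℝ, |φ a - φ b| ≤ |a - b|)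
    (B : Matrix (Fin m) (Fin n) ℝ)
    (X : ℕ → Matrix (Fin m) (Fin n) ℝ)
    (hX0 : X 0 = 0)
    (hXs : ∀ t, X (t + 1) = (W * X t * A + B).map φ) :
    ∃ Xl : Matrix (Fin m) (Fin n) ℝ,
      Tendsto X atTop (nhds Xl) ∧ Xl = (W * Xl * A + B).map φ := by
  set G : (Fin n × Fin m → ℝ) → Fin n × Fin m → ℝ := fun x => φ ∘ ((Aᵀ ⊗ₖ W) *ᵥ x + vec B)
  have hvec : ∀ Y, vec ((W * Y * A + B).map φ) = G (vec Y) := fun Y => by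
    simp only [G, kronecker_mulVec_vec, transpose_transpose, vec_map, vec_add]
  have hXG : ∀ t, vec (X t) = G^[t] 0 := fun t => by
    induction t with
    | zero => rw [hX0, vec_zero, Function.iterate_zero_apply]
    | succ t ih => rw [hXs, hvec, ih, Function.iterate_succ_apply']
  obtain ⟨y, hy, hfix⟩ := exists_tendsto_iterate_isFixedPt_of_abs_sub_le_mulVec
    (fun _ _ => abs_nonneg _) hρ (abs_comp_mulVec_add_sub_le hφ _ (vec B)) 0
  refine ⟨of fun i j => y (j, i), ?_, ?_⟩
  · refine tendsto_pi_nhds.2 fun i => tendsto_pi_nhds.2 fun j => ?_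
    exact (tendsto_pi_nhds.1 hy (j, i)).congr fun t => (congrFun (hXG t) (j, i)).symm
  · rw [← vec_inj, hvec]
    exact hfix.symm
end

section
/- Let A be an entrywise nonnegative real n×n matrix and W a real m×m matrix with ‖W‖_∞ · ρ(A) < 1, where ρ(A) is the spectral radius of A. Then the spectral radius of |Aᵀ ⊗ W| is strictly less than 1, and consequently for every componentwise non-expansive φ : ℝ → ℝ and every real m×n matrix B, the equation X = φ(W X A + B) has exactly one solution X ∈ ℝ^{m×n}. -/
open Matrix Kronecker

/-- The maximum absolute row-sum norm of a real matrix: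
the supremum over rows `i` of `∑ j, |M i j|`. -/
noncomputable def rowSumNorm {ι κ : Type*} [Fintype ι] [Fintype κ]
    (M : Matrix ι κ ℝ) : ℝ :=
  ⨆ i, ∑ j, |M i j|

/-!
By Gelfand's formula, `‖W‖ ρ(A) < 1` yields some `k ≥ 1` with `‖W‖^k ‖A^k‖ < 1` in the row-sum
norm, and likewise for `Aᵀ`, whose spectrum is that of `A`. Since `A ≥ 0`, `|Aᵀ ⊗ W|^k` is
`(Aᵀ)^k ⊗ |W|^k`, of norm at most `‖(Aᵀ)^k‖ ‖W‖^k < 1`, so `ρ(|Aᵀ ⊗ W|) < 1`. For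
`F X = φ(W X A + B)`, non-expansiveness of `φ` gives `|F X - F Y| ≤ |W| |X - Y| A` entrywise;
iterating, `|F^k X - F^k Y| ≤ |W|^k |X - Y| A^k`, so `F^k` is a contraction of the row-sum norm
and Banach's fixed point theorem gives the unique solution.
-/

open scoped NNReal ENNReal
open Filter Function

attribute [local instance] Matrix.linftyOpNormedAddCommGroup Matrix.linftyOpNormedSpace
  Matrix.linftyOpNormedRing Matrix.linftyOpNormedAlgebra

theorem spectrum.eventually_pow_mul_nnnorm_pow_lt_one {A : Type*} [NormedRing A]
    [NormedAlgebra ℂ A] [CompleteSpace A] (a : A) {w : ℝ≥0}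
    (h : (w : ℝ≥0∞) * spectralRadius ℂ a < 1) :
    ∀ᶠ k in atTop, w ^ k * ‖a ^ k‖₊ < 1 := by
  have hlim := ENNReal.Tendsto.const_mul (a := w)
    (spectrum.pow_nnnorm_pow_one_div_tendsto_nhds_spectralRadius a) (Or.inr ENNReal.coe_ne_top)
  filter_upwards [hlim.eventually_lt_const h, eventually_ne_atTop 0] with k hk hk0
  have hpow := pow_lt_one₀ zero_le hk hk0
  rw [mul_pow, one_div, ENNReal.rpow_inv_natCast_pow hk0] at hpow
  exact_mod_cast hpow

theorem spectralRadius_lt_one_of_nnnorm_pow_lt_one {𝕜 A : Type*} [NontriviallyNormedField 𝕜]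
    [NormedRing A] [NormedAlgebra 𝕜 A] [CompleteSpace A] [NormOneClass A] {a : A} {k : ℕ}
    (hk : k ≠ 0) (h : ‖a ^ k‖₊ < 1) : spectralRadius 𝕜 a < 1 := by
  have hle : spectralRadius 𝕜 a ^ k < 1 :=
    ((spectrum.spectralRadius_pow_le a k hk).trans (spectrum.spectralRadius_le_nnnorm _)).trans_lt
      (by exact_mod_cast h)
  contrapose! hle
  exact one_le_pow₀ hle

theorem ContractingWith.existsUnique_isFixedPt_of_iterate {α : Type*} [MetricSpace α]
    [Nonempty α] [CompleteSpace α] {f : α → α} {K : ℝ≥0} {k : ℕ}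
    (hf : ContractingWith K f^[k]) : ∃! x, IsFixedPt f x :=
  ⟨_, hf.isFixedPt_fixedPoint_iterate, fun _ hy => hf.fixedPoint_unique (hy.iterate k)⟩

namespace Matrix

theorem spectrum_transpose {R n : Type*} [CommRing R] [Fintype n] [DecidableEq n]
    (M : Matrix n n R) : spectrum R Mᵀ = spectrum R M := by
  ext k
  simp only [spectrum.mem_iff, isUnit_iff_isUnit_det, Algebra.algebraMap_eq_smul_one]
  rw [← det_transpose (k • 1 - M), transpose_sub, transpose_smul, transpose_one]

theorem kronecker_pow {ι κ α : Type*} [Fintype ι] [Fintype κ] [DecidableEq ι] [DecidableEq κ]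
    [CommSemiring α] (P : Matrix ι ι α) (Q : Matrix κ κ α) (k : ℕ) :
    (P ⊗ₖ Q) ^ k = (P ^ k) ⊗ₖ (Q ^ k) := by
  induction k with
  | zero => simp
  | succ k ih => rw [pow_succ, pow_succ, pow_succ, ih, mul_kronecker_mul]

theorem map_ofReal_pow {ι : Type*} [Fintype ι] [DecidableEq ι] (M : Matrix ι ι ℝ) (k : ℕ) :
    (M ^ k).map Complex.ofReal = M.map Complex.ofReal ^ k :=
  map_pow Complex.ofRealHom.mapMatrix M k

section LinftyOpNorm

variable {l m n p : Type*} [Fintype l] [Fintype m] [Fintype n] [Fintype p]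

theorem linfty_opNNNorm_map_abs (M : Matrix m n ℝ) : ‖M.map (|·|)‖₊ = ‖M‖₊ := by
  simp [linfty_opNNNorm_def, Real.nnnorm_abs]

theorem linfty_opNNNorm_map_ofReal (M : Matrix m n ℝ) : ‖M.map Complex.ofReal‖₊ = ‖M‖₊ := by
  simp [linfty_opNNNorm_def]

theorem linfty_opNNNorm_map_abs_pow_le [DecidableEq m] (M : Matrix m m ℝ) {k : ℕ} (hk : k ≠ 0) :
    ‖M.map (|·|) ^ k‖₊ ≤ ‖M‖₊ ^ k :=
  (nnnorm_pow_le' _ (Nat.pos_of_ne_zero hk)).trans_eq (by rw [linfty_opNNNorm_map_abs])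

theorem linfty_opNNNorm_le_of_abs_le {M P : Matrix m n ℝ} (h : ∀ i j, |M i j| ≤ P i j) :
    ‖M‖₊ ≤ ‖P‖₊ := by
  simp only [linfty_opNNNorm_def]
  refine Finset.sup_mono_fun fun i _ => Finset.sum_le_sum fun j _ => ?_
  rw [← NNReal.coe_le_coe, coe_nnnorm, coe_nnnorm, Real.norm_eq_abs, Real.norm_eq_abs]
  exact (h i j).trans (le_abs_self _)

theorem sum_nnnorm_le_linfty_opNNNorm (M : Matrix m n ℝ) (i : m) : ∑ j, ‖M i j‖₊ ≤ ‖M‖₊ := by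
  rw [linfty_opNNNorm_def]
  exact Finset.le_sup (f := fun i => ∑ j, ‖M i j‖₊) (Finset.mem_univ i)

theorem linfty_opNNNorm_kronecker_le (P : Matrix l m ℝ) (Q : Matrix n p ℝ) :
    ‖P ⊗ₖ Q‖₊ ≤ ‖P‖₊ * ‖Q‖₊ := by
  rw [linfty_opNNNorm_def]
  refine Finset.sup_le fun ⟨i, k⟩ _ => ?_
  calc ∑ q : m × p, ‖(P ⊗ₖ Q) (i, k) q‖₊ = (∑ j, ‖P i j‖₊) * ∑ r, ‖Q k r‖₊ := by
        simp [Fintype.sum_prod_type, Finset.sum_mul_sum, nnnorm_mul]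
    _ ≤ ‖P‖₊ * ‖Q‖₊ := by
        gcongr <;> apply sum_nnnorm_le_linfty_opNNNorm

end LinftyOpNorm

section Entrywise

variable {l m n p : Type*}

theorem kronecker_map_abs (P : Matrix l m ℝ) (Q : Matrix n p ℝ) :
    (P ⊗ₖ Q).map (|·|) = P.map (|·|) ⊗ₖ Q.map (|·|) := by
  ext
  simp [abs_mul]

theorem mul_mul_apply_le_of_le [Fintype m] [Fintype n] {P : Matrix l m ℝ} {M M' : Matrix m n ℝ}
    {Q : Matrix n p ℝ} (hP : ∀ i j, 0 ≤ P i j) (hQ : ∀ i j, 0 ≤ Q i j)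
    (h : ∀ i j, M i j ≤ M' i j) (i : l) (j : p) :
    (P * M * Q) i j ≤ (P * M' * Q) i j := by
  simp only [mul_apply]
  gcongr with b _ a _
  · exact hQ b j
  · exact hP i a
  · exact h a b

theorem abs_mul_mul_apply_le [Fintype m] [Fintype n] (P : Matrix l m ℝ) (M : Matrix m n ℝ)
    (Q : Matrix n p ℝ) (i : l) (j : p) :
    |(P * M * Q) i j| ≤ (P.map (|·|) * M.map (|·|) * Q.map (|·|)) i j := by
  simp only [mul_apply, map_apply]
  refine (Finset.abs_sum_le_sum_abs _ _).trans (Finset.sum_le_sum fun b _ => ?_)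
  rw [abs_mul]
  gcongr
  exact (Finset.abs_sum_le_sum_abs _ _).trans_eq (by simp only [abs_mul])

theorem abs_iterate_sub_apply_le [Fintype m] [Fintype n] [DecidableEq m] [DecidableEq n]
    {F : Matrix m n ℝ → Matrix m n ℝ} {P : Matrix m m ℝ} {Q : Matrix n n ℝ}
    (hP : ∀ i j, 0 ≤ P i j) (hQ : ∀ i j, 0 ≤ Q i j)
    (hF : ∀ X Y i j, |(F X - F Y) i j| ≤ (P * (X - Y).map (|·|) * Q) i j) (k : ℕ)
    (X Y : Matrix m n ℝ) (i : m) (j : n) :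
    |(F^[k] X - F^[k] Y) i j| ≤ (P ^ k * (X - Y).map (|·|) * Q ^ k) i j := by
  induction k generalizing X Y i j with
  | zero => simp
  | succ k ih =>
    calc |(F^[k + 1] X - F^[k + 1] Y) i j|
        ≤ (P ^ k * (F X - F Y).map (|·|) * Q ^ k) i j := ih (F X) (F Y) i j
      _ ≤ (P ^ k * (P * (X - Y).map (|·|) * Q) * Q ^ k) i j :=
        mul_mul_apply_le_of_le (pow_apply_nonneg hP k) (pow_apply_nonneg hQ k) (hF X Y) i j
      _ = (P ^ (k + 1) * (X - Y).map (|·|) * Q ^ (k + 1)) i j := by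
        rw [pow_succ, pow_succ']
        simp only [Matrix.mul_assoc]

theorem abs_map_sub_map_apply_le [Fintype m] [Fintype n] {φ : ℝ → ℝ}
    (hφ : ∀ a b, |φ a - φ b| ≤ |a - b|) (W : Matrix l m ℝ) (A : Matrix n p ℝ) (B : Matrix l p ℝ)
    (X Y : Matrix m n ℝ) (i : l) (j : p) :
    |((W * X * A + B).map φ - (W * Y * A + B).map φ) i j|
      ≤ (W.map (|·|) * (X - Y).map (|·|) * A.map (|·|)) i j :=
  calc _ ≤ |(W * X * A + B) i j - (W * Y * A + B) i j| := hφ _ _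
    _ = |(W * (X - Y) * A) i j| := by simp [Matrix.mul_sub, Matrix.sub_mul]
    _ ≤ _ := abs_mul_mul_apply_le W (X - Y) A i j

theorem lipschitzWith_iterate_map_mul_mul_add [Fintype m] [Fintype n] [DecidableEq m]
    [DecidableEq n] {φ : ℝ → ℝ} (hφ : ∀ a b, |φ a - φ b| ≤ |a - b|) (W : Matrix m m ℝ)
    (A : Matrix n n ℝ) (B : Matrix m n ℝ) {k : ℕ} (hk : k ≠ 0) :
    LipschitzWith (‖W‖₊ ^ k * ‖A.map (|·|) ^ k‖₊)
      (fun X : Matrix m n ℝ => (W * X * A + B).map φ)^[k] := by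
  refine LipschitzWith.of_dist_le_mul fun X Y => ?_
  simp only [dist_eq_norm, ← coe_nnnorm, ← NNReal.coe_mul, NNReal.coe_le_coe]
  calc _ ≤ ‖W.map (|·|) ^ k * (X - Y).map (|·|) * A.map (|·|) ^ k‖₊ :=
        linfty_opNNNorm_le_of_abs_le <| abs_iterate_sub_apply_le (fun _ _ => abs_nonneg _)
          (fun _ _ => abs_nonneg _) (abs_map_sub_map_apply_le hφ W A B) k X Y
    _ ≤ ‖W.map (|·|) ^ k‖₊ * ‖(X - Y).map (|·|)‖₊ * ‖A.map (|·|) ^ k‖₊ := by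
        grw [linfty_opNNNorm_mul, linfty_opNNNorm_mul]
    _ ≤ ‖W‖₊ ^ k * ‖A.map (|·|) ^ k‖₊ * ‖X - Y‖₊ := by
        rw [linfty_opNNNorm_map_abs, mul_right_comm]
        grw [linfty_opNNNorm_map_abs_pow_le W hk]

end Entrywise

end Matrix

section RowSumNormSpecRad

variable {ι κ : Type*} [Fintype ι] [Fintype κ]

theorem rowSumNorm_eq_linfty_opNorm (M : Matrix ι κ ℝ) : rowSumNorm M = ‖M‖ := by
  rw [linfty_opNorm_def, Finset.sup_univ_eq_ciSup, NNReal.coe_iSup]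
  simp [rowSumNorm]

variable [DecidableEq ι]

theorem specRad_transpose (M : Matrix ι ι ℝ) : specRad Mᵀ = specRad M := by
  rw [specRad, specRad, transpose_map, spectralRadius, spectrum_transpose, spectralRadius]

theorem specRad_lt_one_of_nnnorm_pow_lt_one {M : Matrix ι ι ℝ} {k : ℕ} (hk : k ≠ 0)
    (h : ‖M ^ k‖₊ < 1) : specRad M < 1 := by
  rcases isEmpty_or_nonempty ι with hι | hι
  · simp [specRad, spectrum.SpectralRadius.of_subsingleton]
  · refine spectralRadius_lt_one_of_nnnorm_pow_lt_one hk ?_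
    rwa [← Matrix.map_ofReal_pow, Matrix.linfty_opNNNorm_map_ofReal]

theorem exists_pow_mul_nnnorm_pow_lt_one_of_specRad (M : Matrix ι ι ℝ) {w : ℝ≥0}
    (h : (w : ℝ≥0∞) * specRad M < 1) : ∃ k ≠ 0, w ^ k * ‖M ^ k‖₊ < 1 := by
  have hlt := spectrum.eventually_pow_mul_nnnorm_pow_lt_one _ h
  simp only [← Matrix.map_ofReal_pow, Matrix.linfty_opNNNorm_map_ofReal] at hlt
  exact ((eventually_ne_atTop 0).and hlt).exists

end RowSumNormSpecRad

theorem stmt_12 {m n : ℕ} (A : Matrix (Fin n) (Fin n) ℝ) (hA : ∀ i j, 0 ≤ A i j)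
    (W : Matrix (Fin m) (Fin m) ℝ)
    (h : ENNReal.ofReal (rowSumNorm W) * specRad A < 1) :
    specRad ((Aᵀ ⊗ₖ W).map fun a => |a|) < 1 ∧
    ∀ φ : ℝ → ℝ, (∀ a b : ℝ, |φ a - φ b| ≤ |a - b|) →
      ∀ B : Matrix (Fin m) (Fin n) ℝ,
        ∃! X : Matrix (Fin m) (Fin n) ℝ, X = (W * X * A + B).map φ := by
  rw [rowSumNorm_eq_linfty_opNorm, ofReal_norm] at h
  have hA_abs : A.map (|·|) = A := by ext i j; exact abs_of_nonneg (hA i j)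
  refine ⟨?_, fun φ hφ B => ?_⟩
  · rw [← specRad_transpose] at h
    obtain ⟨k, hk0, hk⟩ := exists_pow_mul_nnnorm_pow_lt_one_of_specRad _ h
    refine specRad_lt_one_of_nnnorm_pow_lt_one hk0 (lt_of_le_of_lt ?_ hk)
    rw [Matrix.kronecker_map_abs, transpose_map, hA_abs, Matrix.kronecker_pow, mul_comm]
    grw [Matrix.linfty_opNNNorm_kronecker_le, Matrix.linfty_opNNNorm_map_abs_pow_le W hk0]
  · obtain ⟨k, hk0, hk⟩ := exists_pow_mul_nnnorm_pow_lt_one_of_specRad _ h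
    have hF := Matrix.lipschitzWith_iterate_map_mul_mul_add hφ W A B hk0
    rw [hA_abs] at hF
    simpa only [IsFixedPt, eq_comm] using
      (ContractingWith.existsUnique_isFixedPt_of_iterate ⟨hk, hF⟩)
end
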